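/- Let V1 = (1,b1,c1,d1), V2 = (0,b2,c2,0), V3 = (0,0,0,d3) in se(2) × R with d3 ≠ 0, d3 ≠ d1 and b2² + c2² ≠ 0 (a T4-system). For (θ,x,y,z) ∈ SE(2) × R set [α;β] = (1/(b2²+c2²))·[[b2,c2],[−c2,b2]]·([x;y] − [[−c1,b1],[b1,c1]]·[1−cos θ; sin θ]), ρ = √(α²+β²), t1 = atan2(β,α), t2 = ρ, t3 = θ − t1, t4 = (z − d1θ)/d3. Then exp(t1V1)exp(t2V2)exp(t3V1)exp(t4V3) = (θ,x,y,z). -/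

import Mathlib

open Matrix Real

def eθ : Matrix (Fin 3) (Fin 3) ℝ := !![0,-1,0;1,0,0;0,0,0]
def ex : Matrix (Fin 3) (Fin 3) ℝ := !![0,0,1;0,0,0;0,0,0]
def ey : Matrix (Fin 3) (Fin 3) ℝ := !![0,0,0;0,0,1;0,0,0]

def se2 (a b c : ℝ) : Matrix (Fin 3) (Fin 3) ℝ := a • eθ + b • ex + c • ey

noncomputable def gSE2 (θ x y : ℝ) : Matrix (Fin 3) (Fin 3) ℝ :=
  !![cos θ, -sin θ, x; sin θ, cos θ, y; 0, 0, 1]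

/-- atan2(β,α): the angle of the point (α,β), with atan2 of (0,0) equal to 0. -/
noncomputable def ang (α β : ℝ) : ℝ := Complex.arg (α + β * Complex.I)

open scoped Nat

attribute [local instance] Matrix.linftyOpNormedRing Matrix.linftyOpNormedAlgebra

lemma pow_odd_even {A : Matrix (Fin 3) (Fin 3) ℝ} (h : A ^ 3 = -A) :
    ∀ k : ℕ, A ^ (2 * k + 1) = ((-1 : ℝ)) ^ k • A ∧
      A ^ (2 * k + 2) = ((-1 : ℝ)) ^ k • A ^ 2 := by
  intro k
  induction k with
  | zero => simp [pow_one]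
  | succ n ih =>
    have h4 : A ^ 4 = -(A ^ 2) := by
      rw [pow_succ, h, neg_mul, ← pow_two]
    constructor
    · have e : 2 * (n + 1) + 1 = 2 * n + 1 + 2 := by ring
      rw [e, pow_add, ih.1, smul_mul_assoc, ← _root_.pow_succ',
        show (2:ℕ) + 1 = 3 from rfl, h, _root_.pow_succ]
      module
    · have e : 2 * (n + 1) + 2 = 2 * n + 2 + 2 := by ring
      rw [e, pow_add, ih.2, smul_mul_assoc, ← pow_add, show (2:ℕ) + 2 = 4 from rfl, h4,
        _root_.pow_succ]
      module

lemma exp_of_cube {A : Matrix (Fin 3) (Fin 3) ℝ} (h : A ^ 3 = -A) (t : ℝ) :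
    NormedSpace.exp (t • A) = 1 + Real.sin t • A + (1 - Real.cos t) • A ^ 2 := by
  have hpow := pow_odd_even h
  have hs : HasSum (fun k : ℕ => (-1 : ℝ) ^ k * t ^ (2 * k + 1) / (2 * k + 1)!)
      (Real.sin t) := Real.hasSum_sin t
  have hc : HasSum (fun k : ℕ => (-1 : ℝ) ^ k * t ^ (2 * k + 2) / (2 * k + 2)!)
      (1 - Real.cos t) := by
    have h0 := Real.hasSum_cos t
    have h1 : HasSum (fun k : ℕ => (-1 : ℝ) ^ (k + 1) * t ^ (2 * (k + 1)) / (2 * (k + 1))!)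
        (Real.cos t - 1) := by
      refine (hasSum_nat_add_iff
        (f := fun n : ℕ => (-1 : ℝ) ^ n * t ^ (2 * n) / (2 * n)!) 1).2 ?_
      simpa using h0
    have h2 := h1.neg
    have e : (fun k : ℕ => -((-1 : ℝ) ^ (k + 1) * t ^ (2 * (k + 1)) / (2 * (k + 1))!)) =
        fun k : ℕ => (-1 : ℝ) ^ k * t ^ (2 * k + 2) / (2 * k + 2)! := by
      funext k
      have e2 : 2 * (k + 1) = 2 * k + 2 := by ring
      rw [e2]
      ring
    rw [e, neg_sub] at h2
    exact h2
  set w : ℕ → ℝ := fun n => if Odd n then (-1 : ℝ) ^ (n / 2) * t ^ n / n ! else 0 with hw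
  set v : ℕ → ℝ := fun n =>
    if n ≠ 0 ∧ Even n then (-1 : ℝ) ^ (n / 2 - 1) * t ^ n / n ! else 0 with hv
  have hwval : ∀ k : ℕ, w (2 * k + 1) = (-1 : ℝ) ^ k * t ^ (2 * k + 1) / (2 * k + 1)! := by
    intro k
    rw [hw]
    simp only
    rw [if_pos ⟨k, by omega⟩]
    have : (2 * k + 1) / 2 = k := by omega
    rw [this]
  have hvval : ∀ k : ℕ, v (2 * k + 2) = (-1 : ℝ) ^ k * t ^ (2 * k + 2) / (2 * k + 2)! := by
    intro k
    rw [hv]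
    simp only
    rw [if_pos ⟨by omega, ⟨k + 1, by omega⟩⟩]
    have : (2 * k + 2) / 2 - 1 = k := by omega
    rw [this]
  have hwzero : ∀ k : ℕ, w (2 * k) = 0 := by
    intro k
    rw [hw]
    simp only
    rw [if_neg]
    rintro ⟨r, hr⟩
    omega
  have hvzero : ∀ k : ℕ, v (2 * k + 1) = 0 := by
    intro k
    rw [hv]
    simp only
    rw [if_neg]
    rintro ⟨-, r, hr⟩
    omega
  have hv0 : v 0 = 0 := by rw [hv]; simp
  have hwsum : HasSum w (Real.sin t) := by
    have hinj : Function.Injective (fun k : ℕ => 2 * k + 1) := by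
      intro a b hab
      simp only at hab
      omega
    rw [← Function.Injective.hasSum_iff hinj ?_]
    · convert hs using 1
      funext k
      exact hwval k
    · intro n hn
      rcases Nat.even_or_odd n with ⟨k, hk⟩ | ⟨k, hk⟩
      · have : n = 2 * k := by omega
        rw [this, hwzero]
      · exact absurd ⟨k, by simp only; omega⟩ hn
  have hvsum : HasSum v (1 - Real.cos t) := by
    have hinj : Function.Injective (fun k : ℕ => 2 * k + 2) := by
      intro a b hab
      simp only at hab
      omega
    rw [← Function.Injective.hasSum_iff hinj ?_]
    · convert hc using 1
      funext k
      exact hvval k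
    · intro n hn
      rcases Nat.even_or_odd n with ⟨k, hk⟩ | ⟨k, hk⟩
      · rcases Nat.eq_zero_or_pos k with rfl | hkpos
        · have : n = 0 := by omega
          rw [this, hv0]
        · exact absurd ⟨k - 1, by simp only; omega⟩ hn
      · have : n = 2 * k + 1 := by omega
        rw [this, hvzero]
  have key : HasSum (fun n : ℕ => ((n ! : ℝ)⁻¹) • (t • A) ^ n)
      (1 + Real.sin t • A + (1 - Real.cos t) • A ^ 2) := by
    have h1 : HasSum (fun n : ℕ => if n = 0 then (1 : Matrix (Fin 3) (Fin 3) ℝ) else 0) 1 :=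
      hasSum_ite_eq 0 1
    have h2 : HasSum (fun n : ℕ => w n • A) (Real.sin t • A) := hwsum.smul_const A
    have h3 : HasSum (fun n : ℕ => v n • A ^ 2) ((1 - Real.cos t) • A ^ 2) :=
      hvsum.smul_const (A ^ 2)
    have h4 := (h1.add h2).add h3
    convert h4 using 1
    funext n
    rcases Nat.even_or_odd n with ⟨k, hk⟩ | ⟨k, hk⟩
    · rcases Nat.eq_zero_or_pos k with rfl | hkpos
      · have hn : n = 0 := by omega
        subst hn
        simp [hw, hv]
      · obtain ⟨m, rfl⟩ : ∃ m, k = m + 1 := ⟨k - 1, by omega⟩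
        have hn : n = 2 * m + 2 := by omega
        subst hn
        have hwz : w (2 * m + 2) = 0 := by
          rw [show 2 * m + 2 = 2 * (m + 1) from by ring]; exact hwzero (m + 1)
        rw [hvval m, hwz, if_neg (by omega), smul_pow, (hpow m).2]
        module
    · have hn : n = 2 * k + 1 := by omega
      subst hn
      rw [hwval k, hvzero k, if_neg (by omega), smul_pow, (hpow k).1]
      module
  exact (NormedSpace.exp_series_hasSum_exp' (t • A)).unique key

lemma se2_eq (a b c : ℝ) : se2 a b c = !![0, -a, b; a, 0, c; 0, 0, 0] := by
  ext i j
  fin_cases i <;> fin_cases j <;> simp [se2, eθ, ex, ey, Matrix.vecHead, Matrix.vecTail]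

lemma se2_zero : se2 0 0 0 = 0 := by
  rw [se2_eq]
  ext i j
  fin_cases i <;> fin_cases j <;> simp [Matrix.vecHead, Matrix.vecTail]

lemma se2_rot_sq (b c : ℝ) :
    (se2 1 b c) ^ 2 = !![-1, 0, -c; 0, -1, b; 0, 0, 0] := by
  rw [se2_eq, pow_two]
  ext i j
  fin_cases i <;> fin_cases j <;>
    simp [Matrix.mul_apply, Fin.sum_univ_three, Matrix.vecHead, Matrix.vecTail]

lemma se2_rot_cube (b c : ℝ) : (se2 1 b c) ^ 3 = -(se2 1 b c) := by
  rw [pow_succ, se2_rot_sq, se2_eq]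
  ext i j
  fin_cases i <;> fin_cases j <;>
    simp [Matrix.mul_apply, Fin.sum_univ_three, Matrix.vecHead, Matrix.vecTail]

lemma exp_se2_rot (b c t : ℝ) :
    NormedSpace.exp (t • se2 1 b c) =
      gSE2 t (b * sin t - c * (1 - cos t)) (c * sin t + b * (1 - cos t)) := by
  rw [exp_of_cube (se2_rot_cube b c) t, se2_rot_sq, se2_eq, gSE2]
  ext i j
  fin_cases i <;> fin_cases j <;>
    simp [Matrix.add_apply, Matrix.smul_apply, Matrix.one_apply, Matrix.vecHead, Matrix.vecTail] <;> ring

lemma se2_trans_sq (b c : ℝ) : (se2 0 b c) ^ 2 = 0 := by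
  rw [se2_eq, pow_two]
  ext i j
  fin_cases i <;> fin_cases j <;>
    simp [Matrix.mul_apply, Fin.sum_univ_three, Matrix.vecHead, Matrix.vecTail]

lemma exp_se2_trans (b c t : ℝ) :
    NormedSpace.exp (t • se2 0 b c) = gSE2 0 (t * b) (t * c) := by
  have key : HasSum (fun n : ℕ => ((n ! : ℝ)⁻¹) • (t • se2 0 b c) ^ n)
      (gSE2 0 (t * b) (t * c)) := by
    have hz : ∀ n ∉ ({0, 1} : Finset ℕ),
        ((n ! : ℝ)⁻¹) • (t • se2 0 b c) ^ n = 0 := by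
      intro n hn
      simp only [Finset.mem_insert, Finset.mem_singleton] at hn
      obtain ⟨m, rfl⟩ : ∃ m, n = m + 2 := ⟨n - 2, by omega⟩
      rw [smul_pow, show se2 0 b c ^ (m + 2) = se2 0 b c ^ m * se2 0 b c ^ 2 from
        pow_add _ m 2, se2_trans_sq, mul_zero, smul_zero, smul_zero]
    have h := hasSum_sum_of_ne_finset_zero (L := SummationFilter.unconditional ℕ) hz
    convert h using 1
    rw [Finset.sum_insert (by simp), Finset.sum_singleton]
    rw [pow_zero, pow_one, se2_eq, gSE2]
    ext i j
    fin_cases i <;> fin_cases j <;>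
      simp [Matrix.add_apply, Matrix.smul_apply, Matrix.one_apply, Matrix.vecHead, Matrix.vecTail] <;> ring
  exact (NormedSpace.exp_series_hasSum_exp' _).unique key

lemma gSE2_mul (a p1 q1 b p2 q2 : ℝ) :
    gSE2 a p1 q1 * gSE2 b p2 q2 =
      gSE2 (a + b) (p1 + cos a * p2 - sin a * q2) (q1 + sin a * p2 + cos a * q2) := by
  ext i j
  fin_cases i <;> fin_cases j <;>
    simp [gSE2, Matrix.mul_apply, Fin.sum_univ_three, cos_add, sin_add, Matrix.vecHead, Matrix.vecTail] <;> ring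


/-- Inversion for T4-systems on SE(2) × ℝ: V1 = (1,b1,c1,d1), V2 = (0,b2,c2,0),
V3 = (0,0,0,d3); the inverse-kinematics map is a global right inverse of FK^(1,2,1,3). -/
theorem inversion_T4_SE2R (b1 c1 d1 b2 c2 d3 : ℝ) (hd3 : d3 ≠ 0) (hd : d3 ≠ d1)
    (hb : b2 ^ 2 + c2 ^ 2 ≠ 0) (θ x y z : ℝ) :
    let p := x - (-c1 * (1 - cos θ) + b1 * sin θ)
    let q := y - (b1 * (1 - cos θ) + c1 * sin θ)
    let α := (1 / (b2 ^ 2 + c2 ^ 2)) * (b2 * p + c2 * q)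
    let β := (1 / (b2 ^ 2 + c2 ^ 2)) * (-c2 * p + b2 * q)
    let t1 := ang α β
    let t2 := Real.sqrt (α ^ 2 + β ^ 2)
    let t3 := θ - t1
    let t4 := (z - d1 * θ) / d3
    (NormedSpace.exp (t1 • se2 1 b1 c1) * NormedSpace.exp (t2 • se2 0 b2 c2) *
        NormedSpace.exp (t3 • se2 1 b1 c1) * NormedSpace.exp (t4 • se2 0 0 0),
      t1 * d1 + t3 * d1 + t4 * d3) = (gSE2 θ x y, z) := by
  intro p q α β t1 t2 t3 t4
  have habs : ‖((α : ℂ) + β * Complex.I)‖ = t2 := by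
    rw [Complex.norm_def, Complex.normSq_apply]
    show _ = Real.sqrt (α ^ 2 + β ^ 2)
    norm_num [pow_two]
  have hα : t2 * Real.cos t1 = α := by
    rw [← habs]
    show ‖((α : ℂ) + β * Complex.I)‖ * Real.cos (Complex.arg (α + β * Complex.I)) = α
    rw [Complex.norm_mul_cos_arg]
    simp
  have hβ : t2 * Real.sin t1 = β := by
    rw [← habs]
    show ‖((α : ℂ) + β * Complex.I)‖ * Real.sin (Complex.arg (α + β * Complex.I)) = β
    rw [Complex.norm_mul_sin_arg]
    simp
  have hp : b2 * α - c2 * β = p := by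
    show b2 * ((1 / (b2 ^ 2 + c2 ^ 2)) * (b2 * p + c2 * q)) -
      c2 * ((1 / (b2 ^ 2 + c2 ^ 2)) * (-c2 * p + b2 * q)) = p
    field_simp
    ring
  have hq : c2 * α + b2 * β = q := by
    show c2 * ((1 / (b2 ^ 2 + c2 ^ 2)) * (b2 * p + c2 * q)) +
      b2 * ((1 / (b2 ^ 2 + c2 ^ 2)) * (-c2 * p + b2 * q)) = q
    field_simp
    ring
  have hpd : p = x - (-c1 * (1 - cos θ) + b1 * sin θ) := rfl
  have hqd : q = y - (b1 * (1 - cos θ) + c1 * sin θ) := rfl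
  have hc3 : Real.cos t3 = cos θ * cos t1 + sin θ * sin t1 := by
    show Real.cos (θ - t1) = _
    rw [Real.cos_sub]
  have hs3 : Real.sin t3 = sin θ * cos t1 - cos θ * sin t1 := by
    show Real.sin (θ - t1) = _
    rw [Real.sin_sub]
  have hpyth : Real.sin t1 ^ 2 + Real.cos t1 ^ 2 = 1 := Real.sin_sq_add_cos_sq t1
  have hsnd : t1 * d1 + t3 * d1 + t4 * d3 = z := by
    show t1 * d1 + (θ - t1) * d1 + (z - d1 * θ) / d3 * d3 = z
    field_simp
    ring
  rw [exp_se2_rot, exp_se2_rot, exp_se2_trans, se2_zero, smul_zero, NormedSpace.exp_zero,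
    mul_one, gSE2_mul, gSE2_mul, Prod.mk.injEq]
  refine ⟨?_, hsnd⟩
  rw [show t1 + 0 + t3 = θ from by show t1 + 0 + (θ - t1) = θ; ring]
  have hX : b1 * sin t1 - c1 * (1 - cos t1) + cos t1 * (t2 * b2) - sin t1 * (t2 * c2) +
      cos (t1 + 0) * (b1 * sin t3 - c1 * (1 - cos t3)) -
      sin (t1 + 0) * (c1 * sin t3 + b1 * (1 - cos t3)) = x := by
    rw [add_zero, hc3, hs3]
    linear_combination b2 * hα - c2 * hβ + hp + hpd +
      (b1 * Real.sin θ + c1 * Real.cos θ) * hpyth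
  have hY : c1 * sin t1 + b1 * (1 - cos t1) + sin t1 * (t2 * b2) + cos t1 * (t2 * c2) +
      sin (t1 + 0) * (b1 * sin t3 - c1 * (1 - cos t3)) +
      cos (t1 + 0) * (c1 * sin t3 + b1 * (1 - cos t3)) = y := by
    rw [add_zero, hc3, hs3]
    linear_combination c2 * hα + b2 * hβ + hq + hqd +
      (c1 * Real.sin θ - b1 * Real.cos θ) * hpyth
  rw [hX, hY]
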